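/- arXiv:1311.5317 — 6 statements merged into one kernel-verified Lean document; each statement's English description precedes it below -/
import Mathlib

section
/- If a graph G with vertex connectivity k admits k' pairwise vertex-disjoint dominating trees, then for any vertex r of G there exist k' spanning trees of G rooted at r such that for every vertex v, the paths from r to v in the different trees are internally vertex-disjoint (i.e., G has k' vertex independent spanning trees rooted at r). -/
/-!
Hang every vertex outside the dominating tree `T i` as a leaf on one of its neighbours in `T i`,
and take a spanning tree of the resulting connected graph. A vertex of degree at most one cannot be
an inner vertex of a path, so every path of this spanning tree has its inner vertices in `T i`;
disjointness of the `T i` then makes the `r`–`v` paths of different trees internally disjoint.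
-/

namespace SimpleGraph

variable {V : Type*} {G : SimpleGraph V}

lemma Walk.IsPath.eq_or_eq_of_neighborSet_subsingleton {a b u : V} {p : G.Walk a b}
    (hp : p.IsPath) (hu : u ∈ p.support) (hdeg : (G.neighborSet u).Subsingleton) :
    u = a ∨ u = b := by
  obtain ⟨i, rfl, hi⟩ := Walk.mem_support_iff_exists_getVert.mp hu
  by_contra! hend
  have h0 : i ≠ 0 := by rintro rfl; exact hend.1 p.getVert_zero
  have hlt : i < p.length := lt_of_le_of_ne hi (by rintro rfl; exact hend.2 p.getVert_length)
  have hpred : G.Adj (p.getVert i) (p.getVert (i - 1)) := by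
    simpa [Nat.sub_add_cancel (Nat.pos_of_ne_zero h0)] using
      (p.adj_getVert_succ (show i - 1 < p.length by omega)).symm
  have hsame := hp.getVert_injOn (show i - 1 ≤ p.length by omega)
    (show i + 1 ≤ p.length by omega) (hdeg hpred (p.adj_getVert_succ hlt))
  omega

namespace Subgraph

variable (t : G.Subgraph) (f : V → V)

def attachLeaves : SimpleGraph V :=
  t.spanningCoe ⊔ fromRel fun v w => v ∉ t.verts ∧ w = f v

variable {t f}

lemma attachLeaves_le (hG : ∀ v ∉ t.verts, G.Adj v (f v)) : t.attachLeaves f ≤ G := by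
  refine sup_le t.spanningCoe_le ?_
  rintro v w ⟨-, ⟨hv, rfl⟩ | ⟨hw, rfl⟩⟩
  · exact hG v hv
  · exact (hG w hw).symm

lemma neighborSet_attachLeaves_subsingleton (hf : ∀ v ∉ t.verts, f v ∈ t.verts) {v : V}
    (hv : v ∉ t.verts) : ((t.attachLeaves f).neighborSet v).Subsingleton := by
  refine (Set.subsingleton_singleton (a := f v)).anti ?_
  rintro w (h | ⟨-, ⟨-, rfl⟩ | ⟨hw, rfl⟩⟩)
  · exact absurd h.fst_mem hv
  · rfl
  · exact absurd (hf w hw) hv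

lemma attachLeaves_connected (ht : t.Connected) (hf : ∀ v ∉ t.verts, f v ∈ t.verts) :
    (t.attachLeaves f).Connected := by
  have reach_verts : ∀ v ∈ t.verts, ∀ w ∈ t.verts, (t.attachLeaves f).Reachable v w :=
    fun v hv w hw =>
      (ht.preconnected ⟨v, hv⟩ ⟨w, hw⟩).map ⟨Subtype.val, fun h => Or.inl h⟩
  obtain ⟨x, hx⟩ := ht.nonempty
  refine (connected_iff_exists_forall_reachable _).mpr ⟨x, fun v => ?_⟩
  by_cases hv : v ∈ t.verts
  · exact reach_verts x hx v hv
  · refine (reach_verts x hx (f v) (hf v hv)).trans (Adj.reachable ?_).symm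
    exact Or.inr ⟨fun h => hv (h ▸ hf v hv), .inl ⟨hv, rfl⟩⟩

theorem Connected.exists_isTree_le_isPath_internal_mem_verts (ht : t.Connected)
    (hdom : ∀ v ∉ t.verts, ∃ u ∈ t.verts, G.Adj v u) :
    ∃ S ≤ G, S.IsTree ∧ ∀ ⦃a b u : V⦄ (p : S.Walk a b), p.IsPath → u ∈ p.support →
      u = a ∨ u = b ∨ u ∈ t.verts := by
  have : Nonempty V := ht.nonempty.to_subtype.map Subtype.val
  choose! f hf hG using hdom
  obtain ⟨S, hSH, hS⟩ := (attachLeaves_connected ht hf).exists_isTree_le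
  refine ⟨S, hSH.trans (attachLeaves_le hG), hS, fun a b u p hp hu => ?_⟩
  by_cases hut : u ∈ t.verts
  · exact .inr (.inr hut)
  · have hdeg := (neighborSet_attachLeaves_subsingleton hf hut).anti (neighborSet_mono hSH u)
    exact (hp.eq_or_eq_of_neighborSet_subsingleton hu hdeg).imp_right .inl

end Subgraph

end SimpleGraph

theorem stmt2_general {V : Type*} (G : SimpleGraph V) (k' : ℕ)
    (T : Fin k' → G.Subgraph)
    (htree : ∀ i, (T i).coe.IsTree)
    (hdom : ∀ i, ∀ v ∉ (T i).verts, ∃ u ∈ (T i).verts, G.Adj v u)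
    (hdisj : ∀ i j, i ≠ j → Disjoint (T i).verts (T j).verts)
    (r : V) :
    ∃ T' : Fin k' → SimpleGraph V,
      (∀ i, T' i ≤ G ∧ (T' i).IsTree) ∧
      ∀ v : V, ∃ p : (i : Fin k') → (T' i).Path r v,
        ∀ i j, i ≠ j → ∀ u, u ∈ (p i).val.support → u ∈ (p j).val.support →
          u = r ∨ u = v := by
  classical
  choose S hSG hS hinternal using fun i =>
    SimpleGraph.Subgraph.Connected.exists_isTree_le_isPath_internal_mem_verts
      ⟨(htree i).connected⟩ (hdom i)
  refine ⟨S, fun i => ⟨hSG i, hS i⟩, fun v => ?_⟩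
  let p i : (S i).Path r v := ((hS i).connected.preconnected r v).some.toPath
  refine ⟨p, fun i j hij u hui huj => ?_⟩
  by_contra! hend
  have hi := ((hinternal i (p i).val (p i).property hui).resolve_left hend.1).resolve_left hend.2
  have hj := ((hinternal j (p j).val (p j).property huj).resolve_left hend.1).resolve_left hend.2
  exact Set.disjoint_left.mp (hdisj i j hij) hi hj

/-- If a `k`-vertex-connected graph `G` admits `k'` pairwise vertex-disjoint
dominating trees, then for any vertex `r` there are `k'` vertex independent
spanning trees rooted at `r`: spanning trees such that for every vertex `v`,
the `r`–`v` paths in the different trees are internally vertex-disjoint. -/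
theorem stmt2 {V : Type*} [Fintype V] (G : SimpleGraph V) (k k' : ℕ) (hk : 1 ≤ k)
    (hconn : ∀ S : Set V, S.ncard < k → ((⊤ : G.Subgraph).deleteVerts S).coe.Connected)
    (T : Fin k' → G.Subgraph)
    (htree : ∀ i, (T i).coe.IsTree)
    (hdom : ∀ i, ∀ v ∉ (T i).verts, ∃ u ∈ (T i).verts, G.Adj v u)
    (hdisj : ∀ i j, i ≠ j → Disjoint (T i).verts (T j).verts)
    (r : V) :
    ∃ T' : Fin k' → SimpleGraph V,
      (∀ i, T' i ≤ G ∧ (T' i).IsTree) ∧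
      ∀ v : V, ∃ p : (i : Fin k') → (T' i).Path r v,
        ∀ i j, i ≠ j → ∀ u, u ∈ (p i).val.support → u ∈ (p j).val.support →
          u = r ∨ u = v :=
  stmt2_general G k' T htree hdom hdisj r
end

section
/- A graph with vertex connectivity k can have at most k pairwise vertex-disjoint connected dominating sets. -/
/-!
A connected dominating set `C` disjoint from a vertex set `S` would keep `G - S` connected:
every vertex of `G - S` lies in `C` or has a neighbour in `C`, and `C` is connected inside
`G - S`. Hence each of the disjoint connected dominating sets meets every vertex cut, and
choosing one cut vertex in each of them is an injection into a minimum cut.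
-/

/-- `S` is a connected dominating set of `G`. -/
def IsCDS {V : Type*} (G : SimpleGraph V) (S : Set V) : Prop :=
  (G.induce S).Connected ∧ ∀ v ∉ S, ∃ u ∈ S, G.Adj v u

/-- `S` is a vertex cut of `G`: removing `S` disconnects the graph. -/
def IsVertexCut {V : Type*} (G : SimpleGraph V) (S : Set V) : Prop :=
  ¬ (G.induce Sᶜ).Connected

namespace IsCDS

variable {V : Type*} {G : SimpleGraph V} {C : Set V}

theorem connected_induce_of_subset (hC : IsCDS G C) {T : Set V} (hCT : C ⊆ T) :
    (G.induce T).Connected := by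
  obtain ⟨hconn, hdom⟩ := hC
  obtain ⟨⟨c, hc⟩⟩ := hconn.nonempty
  have : Nonempty T := ⟨⟨c, hCT hc⟩⟩
  let incl : G.induce C →g G.induce T := ⟨fun x => ⟨x.1, hCT x.2⟩, id⟩
  have reach_C : ∀ v : T, ∃ u : C, (G.induce T).Reachable v (incl u) := by
    intro v
    by_cases hv : v.1 ∈ C
    · exact ⟨⟨v, hv⟩, .rfl⟩
    · obtain ⟨u, hu, hadj⟩ := hdom v hv
      exact ⟨⟨u, hu⟩, SimpleGraph.Adj.reachable hadj⟩
  refine .mk fun a b => ?_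
  obtain ⟨a', ha⟩ := reach_C a
  obtain ⟨b', hb⟩ := reach_C b
  exact ha.trans (((hconn.preconnected a' b').map incl).trans hb.symm)

theorem inter_nonempty_of_isVertexCut (hC : IsCDS G C) {S : Set V} (hS : IsVertexCut G S) :
    (C ∩ S).Nonempty := by
  by_contra hCS
  exact hS (hC.connected_induce_of_subset fun v hv hvS => hCS ⟨v, hv, hvS⟩)

end IsCDS

theorem Nat.card_le_ncard_of_pairwise_disjoint_inter_nonempty {V ι : Type*} [Finite ι]
    {S : Set V} (hS : S.Finite) {C : ι → Set V} (hdisj : Pairwise fun i j => Disjoint (C i) (C j))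
    (hmeet : ∀ i, (C i ∩ S).Nonempty) :
    Nat.card ι ≤ S.ncard := by
  choose f hfC hfS using hmeet
  have hinj : Set.InjOn f Set.univ := fun i _ j _ hij => by
    by_contra hne
    exact Set.disjoint_left.mp (hdisj hne) (hfC i) (hij ▸ hfC j)
  simpa using Set.ncard_le_ncard_of_injOn f (fun i _ => hfS i) hinj hS

theorem stmt3_general {V : Type*} [Fintype V] (G : SimpleGraph V) (k : ℕ)
    (S : Set V) (hcut : IsVertexCut G S) (hcard : S.ncard = k)
    (m : ℕ) (C : Fin m → Set V)
    (hCDS : ∀ i, IsCDS G (C i))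
    (hdisj : ∀ i j, i ≠ j → Disjoint (C i) (C j)) :
    m ≤ k := by
  have h := Nat.card_le_ncard_of_pairwise_disjoint_inter_nonempty S.toFinite
    hdisj fun i => (hCDS i).inter_nonempty_of_isVertexCut hcut
  rwa [Nat.card_fin, hcard] at h

/-- A graph with vertex connectivity `k` (witnessed by a vertex cut of size `k`)
can have at most `k` pairwise vertex-disjoint connected dominating sets. -/
theorem stmt3 {V : Type*} [Fintype V] (G : SimpleGraph V) (hG : G.Connected) (k : ℕ)
    (S : Set V) (hcut : IsVertexCut G S) (hcard : S.ncard = k)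
    (hmin : ∀ S' : Set V, IsVertexCut G S' → k ≤ S'.ncard)
    (m : ℕ) (C : Fin m → Set V)
    (hCDS : ∀ i, IsCDS G (C i))
    (hdisj : ∀ i j, i ≠ j → Disjoint (C i) (C j)) :
    m ≤ k :=
  stmt3_general G k S hcut hcard m C hCDS hdisj
end

section
/- Let G be a k-vertex-connected graph and let D ⊆ V(G) be a dominating set. Let C be a subset of D such that G[C] is a union of connected components of G[D] and D \ C is nonempty. Then there exist k internally vertex-disjoint paths in G, each with at most two internal vertices, each having one endpoint in C and the other endpoint in D \ C, and with all internal vertices outside D. -/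
/-!
Call a pair `u, v` of vertices outside `D` a connector if `u` has a neighbour in `C`, `v` has a
neighbour in `D \ C`, and `u = v` or `u ~ v`. Walking from `C` to `D \ C`, domination and the
fact that `C` is closed under adjacency inside `D` force the walk through a connector, so no
set of fewer than `k` vertices meets every connector. König's theorem (derived from Hall's by
padding) then yields `k` connectors with pairwise disjoint vertex sets, provided connectors are
first shrunk to a single vertex whenever possible; each extends to a path of length at most 3.
-/

open Finset Function SimpleGraph

section Konig

variable {α β : Type*} [Fintype α] [Fintype β] (R : α → β → Prop) (k : ℕ)

theorem exists_injective_sum_fin_of_le_card_cover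
    (hcover : ∀ (s : Finset α) (t : Finset β), (∀ a b, R a b → a ∈ s ∨ b ∈ t) → k ≤ #s + #t) :
    ∃ f : α → β ⊕ Fin (Fintype.card α - k),
      Injective f ∧ ∀ a, Sum.elim (R a) (fun _ => True) (f a) := by
  classical
  refine (Fintype.all_card_le_filter_rel_iff_exists_injective _).mp fun A => ?_
  obtain rfl | ⟨a₀, ha₀⟩ := A.eq_empty_or_nonempty
  · simp
  set N : Finset β := {b | ∃ a ∈ A, R a b}
  have hN : k ≤ #Aᶜ + #N := hcover Aᶜ N fun a b hab => by
    by_cases ha : a ∈ A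
    · exact .inr (by simpa [N] using ⟨a, ha, hab⟩)
    · exact .inl (by simpa using ha)
  have hsub : N.disjSum (univ : Finset (Fin (Fintype.card α - k))) ⊆
      ({y | ∃ a ∈ A, Sum.elim (R a) (fun _ => True) y} : Finset _) := by
    rintro (b | j) hy
    · simpa [N] using hy
    · simpa using ⟨a₀, ha₀⟩
  have := card_le_card hsub
  rw [card_disjSum, card_univ, Fintype.card_fin] at this
  rw [card_compl] at hN
  have := card_le_univ A
  omega

theorem exists_matching_of_le_card_cover
    (hcover : ∀ (s : Finset α) (t : Finset β), (∀ a b, R a b → a ∈ s ∨ b ∈ t) → k ≤ #s + #t) :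
    ∃ (f : Fin k → α) (g : Fin k → β), Injective f ∧ Injective g ∧ ∀ i, R (f i) (g i) := by
  classical
  have hk : k ≤ Fintype.card α := by simpa using hcover univ ∅ (by simp)
  obtain ⟨h, hinj, hR⟩ := exists_injective_sum_fin_of_le_card_cover R k hcover
  set L : Finset α := {a | (h a).isLeft}
  have hL : k ≤ #L := by
    have hsub : univ.image h ⊆ L.image h ∪ univ.map Embedding.inr := by
      intro y hy
      obtain ⟨a, -, rfl⟩ := mem_image.mp hy
      cases hha : h a with
      | inl b => exact mem_union_left _ (mem_image.mpr ⟨a, by simp [L, hha], hha⟩)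
      | inr j => exact mem_union_right _ (by simp)
    have := (card_le_card hsub).trans (card_union_le _ _)
    rw [card_image_of_injective _ hinj, card_map, card_univ, card_univ, Fintype.card_fin] at this
    have := card_image_le (s := L) (f := h)
    omega
  have hLeft : ∀ a : L, ∃ b, h a = Sum.inl b := fun a => Sum.isLeft_iff.mp (mem_filter.mp a.2).2
  choose g hg using hLeft
  obtain ⟨e⟩ : Nonempty (Fin k ↪ L) := Embedding.nonempty_of_card_le (by simpa using hL)
  refine ⟨fun i => e i, fun i => g (e i), fun i j hij => e.injective (Subtype.ext hij),
    fun i j hij => e.injective (Subtype.ext (hinj ?_)), fun i => ?_⟩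
  · rw [hg, hg]; exact congrArg Sum.inl hij
  · simpa [hg] using hR (e i)

end Konig

namespace SimpleGraph

variable {V : Type*} (G : SimpleGraph V) (D C : Set V)

def outerNeighbors (X : Set V) : Set V :=
  {w | w ∉ D ∧ ∃ x ∈ X, G.Adj x w}

/-- `u, v` are the inner vertices of a connector path `x - u - v - y` (`x - u - y` if `u = v`)
with `x ∈ C` and `y ∈ D \ C`. -/
def IsConnector (u v : V) : Prop :=
  u ∈ G.outerNeighbors D C ∧ v ∈ G.outerNeighbors D (D \ C) ∧ (u = v ∨ G.Adj u v)

def IsTightConnector (u v : V) : Prop :=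
  G.IsConnector D C u v ∧ (u ∈ G.outerNeighbors D (D \ C) ∨ v ∈ G.outerNeighbors D C → u = v)

variable {G D C}

theorem IsConnector.isTightConnector_or {u v : V} (h : G.IsConnector D C u v) :
    G.IsTightConnector D C u v ∨ G.IsTightConnector D C u u ∨ G.IsTightConnector D C v v := by
  by_cases hu : u ∈ G.outerNeighbors D (D \ C)
  · exact .inr (.inl ⟨⟨h.1, hu, .inl rfl⟩, fun _ => rfl⟩)
  by_cases hv : v ∈ G.outerNeighbors D C
  · exact .inr (.inr ⟨⟨hv, h.2.1, .inl rfl⟩, fun _ => rfl⟩)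
  exact .inl ⟨h, fun h' => (h'.elim hu hv).elim⟩

theorem IsTightConnector.apply_ne_apply {ι : Type*} {f g : ι → V} (hg : Injective g)
    (hfg : ∀ i, G.IsTightConnector D C (f i) (g i)) {i j : ι} (hij : i ≠ j) : f i ≠ g j := by
  intro he
  have hfi : f i = g i := (hfg i).2 (.inl (he ▸ (hfg j).1.2.1))
  exact hij (hg (hfi.symm.trans he))

theorem Walk.exists_isConnector_mem_support (hdom : ∀ v, v ∈ D ∨ ∃ u ∈ D, G.Adj v u)
    (hCcomp : ∀ u ∈ C, ∀ v ∈ D, G.Adj u v → v ∈ C) {a b : V} (q : G.Walk a b)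
    (ha : a ∈ C ∨ a ∈ G.outerNeighbors D C) (hb : b ∈ D \ C) :
    ∃ u ∈ q.support, ∃ v ∈ q.support, G.IsConnector D C u v := by
  induction q with
  | nil => exact ha.elim (fun haC => absurd haC hb.2) fun haN => absurd hb.1 haN.1
  | @cons a c b hac q ih =>
    have step (hc : c ∈ C ∨ c ∈ G.outerNeighbors D C) :
        ∃ u ∈ (cons hac q).support, ∃ v ∈ (cons hac q).support, G.IsConnector D C u v := by
      obtain ⟨u, hu, v, hv, huv⟩ := ih hc hb
      exact ⟨u, by simp [hu], v, by simp [hv], huv⟩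
    rcases ha with haC | haN
    · by_cases hcD : c ∈ D
      · exact step (.inl (hCcomp a haC c hcD hac))
      · exact step (.inr ⟨hcD, a, haC, hac⟩)
    by_cases hcD : c ∈ D
    · by_cases hcC : c ∈ C
      · exact step (.inl hcC)
      · exact ⟨a, by simp, a, by simp, haN, ⟨haN.1, c, ⟨hcD, hcC⟩, hac.symm⟩, .inl rfl⟩
    obtain hc | ⟨e, heD, hce⟩ := hdom c
    · exact absurd hc hcD
    by_cases heC : e ∈ C
    · exact step (.inr ⟨hcD, e, heC, hce.symm⟩)
    · exact ⟨a, by simp, c, by simp, haN, ⟨hcD, e, ⟨heD, heC⟩, hce.symm⟩, .inr hac⟩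

theorem exists_isConnector_not_mem {k : ℕ}
    (hconn : ∀ S : Set V, S.ncard < k → ((⊤ : G.Subgraph).deleteVerts S).coe.Connected)
    (hdom : ∀ v, v ∈ D ∨ ∃ u ∈ D, G.Adj v u) (hCD : C ⊆ D)
    (hCcomp : ∀ u ∈ C, ∀ v ∈ D, G.Adj u v → v ∈ C) {c d : V} (hc : c ∈ C) (hd : d ∈ D \ C)
    (S : Finset V) (hS : #S < k) :
    ∃ u v, u ∉ S ∧ v ∉ S ∧ G.IsConnector D C u v := by
  -- Only the part of `S` outside `D` is deleted, so that `c` and `d` survive.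
  set T : Set V := ↑S \ D
  have hT : T.ncard < k :=
    (Set.ncard_le_ncard Set.sdiff_subset).trans_lt (by rwa [Set.ncard_coe_finset])
  obtain ⟨q⟩ := hconn T hT ⟨c, trivial, fun h => h.2 (hCD hc)⟩ ⟨d, trivial, fun h => h.2 hd.1⟩
  set q' := q.map (Subgraph.hom _)
  have hq' : ∀ w ∈ q'.support, w ∉ T := by
    simp only [q', Walk.support_map, List.mem_map]
    rintro _ ⟨w, -, rfl⟩
    exact w.2.2
  obtain ⟨u, hu, v, hv, huv⟩ := q'.exists_isConnector_mem_support hdom hCcomp (.inl hc) hd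
  exact ⟨u, v, fun huS => hq' u hu ⟨huS, huv.1.1⟩, fun hvS => hq' v hv ⟨hvS, huv.2.1.1⟩, huv⟩

theorem exists_isPath_length_le_three [DecidableEq V] {x u v y : V} (hxu : G.Adj x u)
    (huv : u = v ∨ G.Adj u v) (hvy : G.Adj v y) :
    ∃ p : G.Walk x y, p.IsPath ∧ p.length ≤ 3 ∧
      ∀ w ∈ p.support, w = x ∨ w = u ∨ w = v ∨ w = y := by
  obtain ⟨q, hq, hqs⟩ : ∃ q : G.Walk u v, q.length ≤ 1 ∧ ∀ w ∈ q.support, w = u ∨ w = v := by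
    rcases huv with rfl | h
    · exact ⟨.nil, by simp, by simp⟩
    · exact ⟨h.toWalk, by simp, by simp⟩
  let p := (Walk.cons hxu q).concat hvy
  refine ⟨p.bypass, p.bypass_isPath, ?_, fun w hw => ?_⟩
  · refine p.length_bypass_le_length.trans ?_
    simp only [p, Walk.length_concat, Walk.length_cons]
    omega
  · have := p.support_bypass_subset_support hw
    simp only [p, Walk.support_concat, Walk.support_cons, List.mem_append, List.mem_cons,
      List.not_mem_nil, or_false] at this
    grind

theorem le_card_add_card_of_isTightConnector_cover {k : ℕ}
    (hconn : ∀ S : Set V, S.ncard < k → ((⊤ : G.Subgraph).deleteVerts S).coe.Connected)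
    (hdom : ∀ v, v ∈ D ∨ ∃ u ∈ D, G.Adj v u) (hCD : C ⊆ D)
    (hCcomp : ∀ u ∈ C, ∀ v ∈ D, G.Adj u v → v ∈ C) {c d : V} (hc : c ∈ C) (hd : d ∈ D \ C)
    (s t : Finset V) (hst : ∀ u v, G.IsTightConnector D C u v → u ∈ s ∨ v ∈ t) :
    k ≤ #s + #t := by
  classical
  by_contra! hlt
  obtain ⟨u, v, hu, hv, huv⟩ := exists_isConnector_not_mem hconn hdom hCD hCcomp hc hd (s ∪ t)
    ((card_union_le s t).trans_lt hlt)
  rcases huv.isTightConnector_or with h | h | h <;> rcases hst _ _ h with h' | h' <;> simp_all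

end SimpleGraph

/-- Connector Abundance Lemma: let `G` be `k`-vertex-connected, `D` a dominating
set, and `C ⊆ D` a nonempty union of connected components of `G[D]` with
`D \ C` nonempty. Then there are `k` internally vertex-disjoint paths, each with
at most two internal vertices (length ≤ 3), each from `C` to `D \ C`, with all
internal vertices outside `D`. -/
theorem stmt4 {V : Type*} [Fintype V] (G : SimpleGraph V) (k : ℕ)
    (hconn : ∀ S : Set V, S.ncard < k → ((⊤ : G.Subgraph).deleteVerts S).coe.Connected)
    (D : Set V) (hdom : ∀ v, v ∈ D ∨ ∃ u ∈ D, G.Adj v u)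
    (C : Set V) (hCD : C ⊆ D) (hCne : C.Nonempty)
    (hCcomp : ∀ u ∈ C, ∀ v ∈ D, G.Adj u v → v ∈ C)
    (hDC : (D \ C).Nonempty) :
    ∃ (s t : Fin k → V) (p : (i : Fin k) → G.Walk (s i) (t i)),
      (∀ i, (p i).IsPath) ∧
      (∀ i, s i ∈ C) ∧ (∀ i, t i ∈ D \ C) ∧
      (∀ i, (p i).length ≤ 3) ∧
      (∀ i, ∀ u ∈ (p i).support, u ≠ s i → u ≠ t i → u ∉ D) ∧
      (∀ i j, i ≠ j → ∀ u, u ∈ (p i).support → u ∈ (p j).support →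
        (u = s i ∨ u = t i) ∧ (u = s j ∨ u = t j)) := by
  classical
  obtain ⟨c, hc⟩ := hCne
  obtain ⟨d, hd⟩ := hDC
  obtain ⟨f, g, hf, hg, hfg⟩ := exists_matching_of_le_card_cover (G.IsTightConnector D C) k
    (le_card_add_card_of_isTightConnector_cover hconn hdom hCD hCcomp hc hd)
  choose x hxC hxf using fun i => (hfg i).1.1.2
  choose y hyDC hyg using fun i => (hfg i).1.2.1.2
  choose p hp hlen hsupp using fun i =>
    exists_isPath_length_le_three (hxf i) (hfg i).1.2.2 (hyg i).symm
  have endpoint_of_mem {i w} (hw : w ∈ (p i).support) (hwD : w ∈ D) : w = x i ∨ w = y i := by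
    have := (hfg i).1.1.1
    have := (hfg i).1.2.1.1
    grind
  have inner_of_notMem {i w} (hw : w ∈ (p i).support) (hwD : w ∉ D) : w = f i ∨ w = g i := by
    have := hCD (hxC i)
    have := (hyDC i).1
    grind
  refine ⟨x, y, p, hp, hxC, hyDC, hlen, fun i w hw hwx hwy hwD => ?_, fun i j hij w hwi hwj => ?_⟩
  · exact (endpoint_of_mem hw hwD).elim hwx hwy
  have hwD : w ∈ D := by
    by_contra hwD
    rcases inner_of_notMem hwi hwD with rfl | rfl <;> rcases inner_of_notMem hwj hwD with h | h
    exacts [hij (hf h), IsTightConnector.apply_ne_apply hg hfg hij h,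
      (IsTightConnector.apply_ne_apply hg hfg hij.symm h.symm).elim, hij (hg h)]
  exact ⟨endpoint_of_mem hwi hwD, endpoint_of_mem hwj hwD⟩
end

section
/- Let G be a k-vertex-connected graph, let D be a dominating set of G, and let u, v be vertices with u in one connected component of G[D] and v in a different connected component of G[D]. Then any path in G between the two components can be shortened to a path with at most two internal vertices, none of which lie in D, connecting the component of u to D minus that component. -/
/-!
Let `N = thickenOutside G D C` be `C` together with the neighbours of `C` outside `D`.
The walk `p0` starts in `N` and ends at `v ∈ D \ C`, which is not in `N`, so it has an edge
`ab` leaving `N`. If `a ∉ C`, prepend a neighbour of `a` in `C`. If `b ∉ D`, then `b` is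
dominated by some `d ∈ D`, and `d ∉ C` since `b ∉ N`; append `d`. The result has
at most the two internal vertices `a`, `b`.
-/

namespace SimpleGraph

variable {V : Type*} {G : SimpleGraph V} {D C : Set V}

def thickenOutside (G : SimpleGraph V) (D C : Set V) : Set V :=
  C ∪ {x | x ∉ D ∧ ∃ c ∈ C, G.Adj c x}

lemma exists_adj_of_notMem_thickenOutside (hdom : ∀ v, v ∈ D ∨ ∃ u ∈ D, G.Adj v u)
    {b : V} (hb : b ∉ G.thickenOutside D C) :
    b ∈ D \ C ∨ b ∉ D ∧ ∃ d ∈ D \ C, G.Adj b d := by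
  simp only [thickenOutside, Set.mem_union, Set.mem_ofPred_eq, not_or, not_and,
    not_exists] at hb
  by_cases hbD : b ∈ D
  · exact .inl ⟨hbD, hb.1⟩
  · obtain hbD' | ⟨d, hdD, hbd⟩ := hdom b
    · exact absurd hbD' hbD
    · exact .inr ⟨hbD, d, ⟨hdD, fun hdC => hb.2 hbD d hdC hbd.symm⟩, hbd⟩

theorem exists_short_path_of_adj_of_mem_thickenOutside
    (hdom : ∀ v, v ∈ D ∨ ∃ u ∈ D, G.Adj v u) (hCD : C ⊆ D) {a b : V} (hab : G.Adj a b)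
    (ha : a ∈ G.thickenOutside D C) (hb : b ∉ G.thickenOutside D C) :
    ∃ (s t : V) (p : G.Walk s t), p.IsPath ∧ s ∈ C ∧ t ∈ D \ C ∧ p.length ≤ 3 ∧
      (∀ w ∈ p.support, w ≠ s → w ≠ t → w ∉ D) ∧
      (∀ w ∈ p.support, w ∉ D → w = a ∨ w = b) := by
  rcases ha with haC | ⟨haD, c, hcC, hca⟩ <;>
    rcases exists_adj_of_notMem_thickenOutside hdom hb with
      ⟨hbD, hbC⟩ | ⟨hbD, d, ⟨hdD, hdC⟩, hbd⟩
  · exact ⟨a, b, .cons hab .nil, by simp [hab.ne], haC, ⟨hbD, hbC⟩, by simp, by simp, by simp⟩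
  · refine ⟨a, d, .cons hab (.cons hbd .nil), ?_, haC, ⟨hdD, hdC⟩, by simp, ?_, ?_⟩
    · simp [Walk.isPath_def, hab.ne, hbd.ne, ne_of_mem_of_not_mem haC hdC]
    · simp [hbD]
    · simp [hCD haC, hdD]
  · refine ⟨c, b, .cons hca (.cons hab .nil), ?_, hcC, ⟨hbD, hbC⟩, by simp, ?_, ?_⟩
    · simp [Walk.isPath_def, hca.ne, hab.ne, ne_of_mem_of_not_mem hcC hbC]
    · simp [haD]
    · simp [hCD hcC, hbD]
  · refine ⟨c, d, .cons hca (.cons hab (.cons hbd .nil)), ?_, hcC, ⟨hdD, hdC⟩, by simp, ?_, ?_⟩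
    · simp [Walk.isPath_def, hca.ne, hab.ne, hbd.ne, ne_of_mem_of_not_mem (hCD hcC) hbD,
        ne_of_mem_of_not_mem hcC hdC, (ne_of_mem_of_not_mem hdD haD).symm]
    · simp [haD, hbD]
    · simp [hCD hcC, hdD]

end SimpleGraph

theorem stmt5_general {V : Type*} (G : SimpleGraph V)
    (D : Set V) (hdom : ∀ v, v ∈ D ∨ ∃ u ∈ D, G.Adj v u)
    (u v : V) (hu : u ∈ D) (hv : v ∈ D)
    (C : Set V)
    (hC : C = {w | ∃ hw : w ∈ D, (G.induce D).Reachable ⟨u, hu⟩ ⟨w, hw⟩})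
    (hvC : v ∉ C)
    (p0 : G.Walk u v) :
    ∃ (s t : V) (p : G.Walk s t), p.IsPath ∧ s ∈ C ∧ t ∈ D \ C ∧
      p.length ≤ 3 ∧
      (∀ w ∈ p.support, w ≠ s → w ≠ t → w ∉ D) ∧
      (∀ w ∈ p.support, w ∉ D → w ∈ p0.support) := by
  have hCD : C ⊆ D := fun w hw => (hC ▸ hw).1
  have huC : u ∈ C := hC ▸ ⟨hu, SimpleGraph.Reachable.refl _⟩
  have hvN : v ∉ G.thickenOutside D C := by
    simp [SimpleGraph.thickenOutside, hvC, hv]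
  obtain ⟨e, he, ha, hb⟩ := p0.exists_boundary_dart _ (Or.inl huC) hvN
  obtain ⟨s, t, p, hp, hs, ht, hlen, hinner, hsupp⟩ :=
    SimpleGraph.exists_short_path_of_adj_of_mem_thickenOutside hdom hCD e.adj ha hb
  refine ⟨s, t, p, hp, hs, ht, hlen, hinner, fun w hw hwD => ?_⟩
  rcases hsupp w hw hwD with rfl | rfl
  exacts [p0.dart_fst_mem_support_of_mem_darts he, p0.dart_snd_mem_support_of_mem_darts he]

/-- Path-shortening lemma: in a `k`-vertex-connected graph `G` with dominating
set `D`, if `u` and `v` lie in different connected components of `G[D]` and `C`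
is the component of `u`, then any `u`–`v` path can be shortened to a path with
at most two internal vertices (length ≤ 3), none of which lie in `D`, from `C`
to `D \ C`, whose internal vertices all lie on the original path. -/
theorem stmt5 {V : Type*} [Fintype V] (G : SimpleGraph V) (k : ℕ)
    (hconn : ∀ S : Set V, S.ncard < k → ((⊤ : G.Subgraph).deleteVerts S).coe.Connected)
    (D : Set V) (hdom : ∀ v, v ∈ D ∨ ∃ u ∈ D, G.Adj v u)
    (u v : V) (hu : u ∈ D) (hv : v ∈ D)
    (C : Set V)
    (hC : C = {w | ∃ hw : w ∈ D, (G.induce D).Reachable ⟨u, hu⟩ ⟨w, hw⟩})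
    (hvC : v ∉ C)
    (p0 : G.Walk u v) (hp0 : p0.IsPath) :
    ∃ (s t : V) (p : G.Walk s t), p.IsPath ∧ s ∈ C ∧ t ∈ D \ C ∧
      p.length ≤ 3 ∧
      (∀ w ∈ p.support, w ≠ s → w ≠ t → w ∉ D) ∧
      (∀ w ∈ p.support, w ∉ D → w ∈ p0.support) :=
  stmt5_general G D hdom u v hu hv C hC hvC p0
end

section
/- Let Z be a nonnegative-integer-valued random variable such that E[Z] ≥ z_0 for a constant z_0 > 1, and suppose that for every integer ζ ≥ 1, Pr[Z = ζ] ≤ (4e·z_0/ζ)^ζ. Then Pr[Z ≥ 1] ≥ 1/20 − 1/2^{10}; in particular Pr[Z ≥ 1] ≥ δ for some absolute constant δ > 0. -/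
/-!
Split `E[Z]` at `m + 1`, where `m = ⌊20 z₀⌋ ≥ 20`. Below the cut every nonzero value is at most
`m ≤ 20 z₀`, so that part of the expectation is at most `20 z₀ · Pr[Z ≥ 1]`. Beyond it
`4e z₀ / k ≤ e/5`, so `k · Pr[Z = k] ≤ k (e/5)^k ≤ (6e/25)^k < 0.66^k` (as `k ≤ (6/5)^k` for
`k ≥ 21`), and the tail of the expectation is below `2⁻¹⁰`. Hence
`z₀ - 2⁻¹⁰ ≤ 20 z₀ · Pr[Z ≥ 1]`, and `z₀ > 1` gives the claim.
-/

open Finset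

lemma nat_le_six_fifths_pow {k : ℕ} (hk : 21 ≤ k) : (k : ℝ) ≤ (6 / 5) ^ k := by
  induction k, hk using Nat.le_induction with
  | base => norm_num
  | succ n hn ih =>
    have hn' : (21 : ℝ) ≤ n := by exact_mod_cast hn
    push_cast
    calc (n : ℝ) + 1 ≤ 6 / 5 * n := by linarith
      _ ≤ 6 / 5 * (6 / 5) ^ n := by gcongr
      _ = (6 / 5) ^ (n + 1) := by ring

lemma nat_mul_exp_one_div_five_pow_le {k : ℕ} (hk : 21 ≤ k) :
    (k : ℝ) * (Real.exp 1 / 5) ^ k ≤ (33 / 50) ^ k := by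
  have he : Real.exp 1 < 2.75 := Real.exp_one_lt_d9.trans (by norm_num)
  calc (k : ℝ) * (Real.exp 1 / 5) ^ k ≤ (6 / 5) ^ k * (Real.exp 1 / 5) ^ k := by
        gcongr
        exact nat_le_six_fifths_pow hk
    _ = (6 / 5 * (Real.exp 1 / 5)) ^ k := (mul_pow _ _ _).symm
    _ ≤ (33 / 50) ^ k := by
        gcongr
        linarith

lemma tsum_nat_add_mul_le_of_le_exp_one_div_five_pow {p : ℕ → ℝ} {M : ℕ} (hM : 21 ≤ M)
    (hsum : Summable fun n : ℕ => (n : ℝ) * p n)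
    (hp : ∀ k, M ≤ k → p k ≤ (Real.exp 1 / 5) ^ k) :
    ∑' n : ℕ, ((n + M : ℕ) : ℝ) * p (n + M) ≤ 1 / 2 ^ 10 := by
  have hgeom : Summable fun n : ℕ => (33 / 50 : ℝ) ^ (n + M) := by
    simp_rw [pow_add]
    exact (summable_geometric_of_lt_one (by norm_num) (by norm_num)).mul_right _
  have hterm (n : ℕ) : ((n + M : ℕ) : ℝ) * p (n + M) ≤ (33 / 50) ^ (n + M) :=
    calc ((n + M : ℕ) : ℝ) * p (n + M)
        ≤ ((n + M : ℕ) : ℝ) * (Real.exp 1 / 5) ^ (n + M) := by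
          gcongr
          exact hp _ (Nat.le_add_left _ _)
      _ ≤ (33 / 50) ^ (n + M) := nat_mul_exp_one_div_five_pow_le (by omega)
  calc ∑' n : ℕ, ((n + M : ℕ) : ℝ) * p (n + M)
      ≤ ∑' n : ℕ, (33 / 50 : ℝ) ^ (n + M) :=
        ((summable_nat_add_iff M).2 hsum).tsum_le_tsum hterm hgeom
    _ = (1 - 33 / 50)⁻¹ * (33 / 50) ^ M := by
        simp_rw [pow_add]
        rw [tsum_mul_right, tsum_geometric_of_lt_one (by norm_num) (by norm_num)]
    _ ≤ (1 - 33 / 50)⁻¹ * (33 / 50) ^ 21 :=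
        mul_le_mul_of_nonneg_left (pow_le_pow_of_le_one (by norm_num) (by norm_num) hM)
          (by norm_num)
    _ ≤ 1 / 2 ^ 10 := by norm_num

lemma sum_range_succ_mul_le {p : ℕ → ℝ} (hp0 : ∀ n, 0 ≤ p n) (hp : Summable p) (m : ℕ) :
    ∑ i ∈ range (m + 1), (i : ℝ) * p i ≤ m * ∑' n : ℕ, p (n + 1) := by
  rw [sum_range_succ', Nat.cast_zero, zero_mul, add_zero]
  calc ∑ i ∈ range m, ((i + 1 : ℕ) : ℝ) * p (i + 1)
      ≤ ∑ i ∈ range m, (m : ℝ) * p (i + 1) := by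
        gcongr with i hi
        · exact hp0 _
        · exact_mod_cast mem_range.1 hi
    _ = m * ∑ i ∈ range m, p (i + 1) := (mul_sum _ _ _).symm
    _ ≤ m * ∑' n : ℕ, p (n + 1) := by
        gcongr
        exact ((summable_nat_add_iff 1).2 hp).sum_le_tsum _ fun i _ => hp0 _

lemma tsum_mul_le_mul_tsum_add_tsum_nat_add {p : ℕ → ℝ} (hp0 : ∀ n, 0 ≤ p n) (hp : Summable p)
    (hsum : Summable fun n : ℕ => (n : ℝ) * p n) (m : ℕ) :
    ∑' n : ℕ, (n : ℝ) * p n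
      ≤ m * ∑' n : ℕ, p (n + 1) + ∑' n : ℕ, ((n + (m + 1) : ℕ) : ℝ) * p (n + (m + 1)) := by
  rw [← hsum.sum_add_tsum_nat_add (m + 1)]
  gcongr
  exact sum_range_succ_mul_le hp0 hp m

theorem stmt6_general (p : ℕ → ℝ) (z0 : ℝ)
    (hp0 : ∀ n, 0 ≤ p n) (hp1 : (∑' n : ℕ, p n) = 1)
    (hz0 : 1 < z0)
    (hE : z0 ≤ ∑' n : ℕ, (n : ℝ) * p n)
    (htail : ∀ ζ : ℕ, 1 ≤ ζ → p ζ ≤ (4 * Real.exp 1 * z0 / ζ) ^ ζ) :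
    1 / 20 - 1 / 2 ^ 10 ≤ 1 - p 0 ∧ ∃ δ : ℝ, 0 < δ ∧ δ ≤ 1 - p 0 := by
  have hp : Summable p := by
    by_contra h
    simp [tsum_eq_zero_of_not_summable h] at hp1
  have hsum : Summable fun n : ℕ => (n : ℝ) * p n := by
    by_contra h
    rw [tsum_eq_zero_of_not_summable h] at hE
    linarith
  have hmass : ∑' n : ℕ, p (n + 1) = 1 - p 0 := by linarith [hp.tsum_eq_zero_add]
  set m := ⌊20 * z0⌋₊
  have hm_le : (m : ℝ) ≤ 20 * z0 := Nat.floor_le (by linarith)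
  have hm_gt : 20 * z0 < m + 1 := Nat.lt_floor_add_one _
  have hm20 : 20 ≤ m := Nat.le_floor (by push_cast; linarith)
  have hdecay (k : ℕ) (hk : m + 1 ≤ k) : p k ≤ (Real.exp 1 / 5) ^ k := by
    have hk' : 20 * z0 ≤ k := hm_gt.le.trans (by exact_mod_cast hk)
    refine (htail k (by omega)).trans (pow_le_pow_left₀ (by positivity) ?_ k)
    rw [div_le_div_iff₀ (by linarith) (by norm_num)]
    nlinarith [Real.exp_pos 1]
  have htail_sum :=
    tsum_nat_add_mul_le_of_le_exp_one_div_five_pow (by omega) hsum hdecay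
  have hsplit := tsum_mul_le_mul_tsum_add_tsum_nat_add hp0 hp hsum m
  have hq : 0 ≤ 1 - p 0 := hmass ▸ tsum_nonneg fun n => hp0 _
  have hmain : 1 / 20 - 1 / 2 ^ 10 ≤ 1 - p 0 := by
    rw [hmass] at hsplit
    nlinarith [mul_le_mul_of_nonneg_right hm_le hq]
  exact ⟨hmain, 1 / 20 - 1 / 2 ^ 10, by norm_num, hmain⟩

/-- Tail bound used in the Fast Merger Lemma: if `Z` is an `ℕ`-valued random
variable (given by its distribution `p`) with `E[Z] ≥ z₀ > 1` and
`Pr[Z = ζ] ≤ (4e·z₀/ζ)^ζ` for all `ζ ≥ 1`, then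
`Pr[Z ≥ 1] = 1 − p 0 ≥ 1/20 − 1/2^10 > 0`. -/
theorem stmt6 (p : ℕ → ℝ) (z0 : ℝ)
    (hp0 : ∀ n, 0 ≤ p n) (hp1 : (∑' n : ℕ, p n) = 1)
    (hsum : Summable (fun n : ℕ => (n : ℝ) * p n))
    (hz0 : 1 < z0)
    (hE : z0 ≤ ∑' n : ℕ, (n : ℝ) * p n)
    (htail : ∀ ζ : ℕ, 1 ≤ ζ → p ζ ≤ (4 * Real.exp 1 * z0 / ζ) ^ ζ) :
    1 / 20 - 1 / 2 ^ 10 ≤ 1 - p 0 ∧ ∃ δ : ℝ, 0 < δ ∧ δ ≤ 1 - p 0 :=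
  stmt6_general p z0 hp0 hp1 hz0 hE htail
end

section
/- Let G be a graph with m edges and edge connectivity λ. Then G contains at least ⌈(λ−1)/2⌉ pairwise edge-disjoint spanning trees. -/
/-!
Take `k = ⌊λ/2⌋` pairwise edge-disjoint forests of `G` with the largest possible total number of
edges, and call an edge *exchangeable* if some sequence of exchanges (put the left-out edge into a
forest, remove an edge of the cycle it closes) ends with that edge left out. The matroid-union
augmenting-path argument shows that every forest of the packing joins the ends of each
exchangeable edge through exchangeable edges of its own. If the exchangeable edges did not connect
`G`, the at least `λ ≥ 2k` edges leaving each of their components would all be used by the packing,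
and together with the edges the forests need inside the components this is too many for `k`
forests. So every forest connects `G`, i.e. is a spanning tree.
-/

def IsEdgeConnected {V : Type*} (G : SimpleGraph V) (lam : ℕ) : Prop :=
  G.Connected ∧ ∀ F : Set (Sym2 V), F.ncard < lam → (G.deleteEdges F).Connected

open Function

namespace SimpleGraph

variable {V : Type*} {G H : SimpleGraph V} {u v x y : V}

theorem Walk.reachable_of_forall_dart (p : G.Walk u v)
    (h : ∀ d ∈ p.darts, H.Reachable d.fst d.snd) : H.Reachable u v := by
  induction p with
  | nil => rfl
  | cons _ p ih =>
    simp only [Walk.darts_cons, List.mem_cons, forall_eq_or_imp] at h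
    exact h.1.trans (ih h.2)

theorem Reachable.of_forall_adj (h : ∀ ⦃u v⦄, G.Adj u v → H.Reachable u v)
    (huv : G.Reachable u v) : H.Reachable u v :=
  let ⟨p⟩ := huv
  p.reachable_of_forall_dart fun d _ ↦ h d.adj

theorem card_connectedComponent_le_of_forall_adj [Finite V]
    (h : ∀ ⦃u v⦄, G.Adj u v → H.Reachable u v) :
    Nat.card H.ConnectedComponent ≤ Nat.card G.ConnectedComponent :=
  Nat.card_le_card_of_surjective
    (ConnectedComponent.lift H.connectedComponentMk fun _ _ p _ ↦
      ConnectedComponent.sound (p.reachable.of_forall_adj h))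
    (ConnectedComponent.ind fun v ↦ ⟨G.connectedComponentMk v, rfl⟩)

/-- Every vertex other than the chosen root of its component is charged to the last edge of a
shortest path from the root; these edges are distinct because the distance to the root strictly
increases along them. -/
theorem card_le_card_connectedComponent_add_ncard_edgeSet [Finite V] :
    Nat.card V ≤ Nat.card G.ConnectedComponent + G.edgeSet.ncard := by
  classical
  set r : V → V := fun v ↦ (G.connectedComponentMk v).out
  have hr (v : V) : G.Reachable (r v) v :=
    ConnectedComponent.exact (G.connectedComponentMk v).out_eq
  have hr_eq {v w : V} (h : G.Reachable v w) : r v = r w := by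
    simp only [r, ConnectedComponent.sound h]
  have parent (v : V) (hv : r v ≠ v) : ∃ w, G.Adj w v ∧ G.dist (r v) w < G.dist (r v) v := by
    obtain ⟨q, hq⟩ := (hr v).exists_walk_length_eq_dist
    have hnil : ¬q.Nil := Walk.not_nil_of_ne hv
    refine ⟨q.penultimate, Walk.adj_penultimate hnil, ?_⟩
    have := dist_le q.dropLast
    have := Walk.not_nil_iff_lt_length.1 hnil
    rw [Walk.length_dropLast] at *
    omega
  choose p hp using parent
  let f (v : V) : G.ConnectedComponent ⊕ G.edgeSet :=
    if h : r v = v then .inl (G.connectedComponentMk v) else .inr ⟨s(p v h, v), (hp v h).1⟩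
  have hf : Injective f := by
    intro v w hvw
    by_cases hv : r v = v <;> by_cases hw : r w = w <;> simp only [f, hv, hw, dite_true,
      dite_false, reduceCtorEq, Sum.inl.injEq, Sum.inr.injEq] at hvw
    · rw [← hv, ← hw, ← ConnectedComponent.eq.1 hvw |> hr_eq]
    · rcases Sym2.eq_iff.1 (congrArg Subtype.val hvw) with ⟨-, h⟩ | ⟨hpv, hpw⟩
      · exact h
      · have hrw : r v = r w := hr_eq (hpw ▸ (hp w hw).1.reachable)
        have h1 := (hp v hv).2
        have h2 := (hp w hw).2
        rw [hpv] at h1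
        rw [← hpw, ← hrw] at h2
        omega
  calc Nat.card V ≤ Nat.card (G.ConnectedComponent ⊕ G.edgeSet) :=
        Nat.card_le_card_of_injective f hf
    _ = _ := by rw [Nat.card_sum, Nat.card_coe_set_eq]

theorem IsAcyclic.ncard_edgeSet_add_one_le [Finite V] [Nonempty V] (hG : G.IsAcyclic) :
    G.edgeSet.ncard + 1 ≤ Nat.card V := by
  obtain ⟨T, hGT, -, hT⟩ := connected_top.exists_isTree_le_of_le_of_isAcyclic le_top hG
  rw [← (isTree_iff_connected_and_card.1 hT).2, Nat.card_coe_set_eq]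
  exact Nat.add_le_add_right (Set.ncard_le_ncard (edgeSet_mono hGT)) 1

theorem IsAcyclic.not_reachable_deleteEdges_of_mem_edges (hG : G.IsAcyclic) {p : G.Walk u v}
    (hp : p.IsPath) {e : Sym2 V} (he : e ∈ p.edges) : ¬(G.deleteEdges {e}).Reachable u v := by
  intro hreach
  obtain ⟨q, hq⟩ := hreach.exists_isPath
  have : q.mapLe (G.deleteEdges_le _) = p :=
    congrArg Subtype.val <| (hG.subsingleton_path u v).elim ⟨_, hq.mapLe _⟩ ⟨p, hp⟩
  rw [← this, Walk.edges_mapLe_eq_edges] at he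
  simpa [edgeSet_deleteEdges] using q.edges_subset_edgeSet he

theorem ncard_edgeSet_sup_edge [Finite V] (hxy : x ≠ y) (h : s(x, y) ∉ G.edgeSet) :
    (G ⊔ edge x y).edgeSet.ncard = G.edgeSet.ncard + 1 := by
  rw [edgeSet_sup, edgeSet_edge_of_ne hxy, Set.union_singleton, Set.ncard_insert_of_notMem h]

theorem _root_.IsEdgeConnected.le_ncard_cut {lam : ℕ} (h : _root_.IsEdgeConnected G lam)
    {S : Set V} {a b : V} (ha : a ∈ S) (hb : b ∉ S) :
    lam ≤ {e ∈ G.edgeSet | ∃ x ∈ S, ∃ y ∉ S, e = s(x, y)}.ncard := by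
  by_contra! hlt
  obtain ⟨p⟩ := (h.2 _ hlt).preconnected a b
  obtain ⟨d, -, hd, hd'⟩ := p.exists_boundary_dart S ha hb
  have hadj := deleteEdges_adj.1 d.adj
  exact hadj.2 ⟨hadj.1, d.fst, hd, d.snd, hd', rfl⟩

/-- Every block of a partition of `V` into at least two blocks is left by at least `lam` edges,
and every edge leaves at most two blocks. -/
theorem _root_.IsEdgeConnected.card_mul_le_two_mul_ncard_crossing [Finite V] {β : Type*}
    [Nontrivial β] {lam : ℕ} (h : _root_.IsEdgeConnected G lam) {π : V → β}
    (hπ : Surjective π) :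
    Nat.card β * lam ≤ 2 * {e ∈ G.edgeSet | ∃ x y, π x ≠ π y ∧ e = s(x, y)}.ncard := by
  classical
  have := Fintype.ofFinite V
  have : Finite β := .of_surjective π hπ
  have := Fintype.ofFinite β
  set X := {e ∈ G.edgeSet | ∃ x y, π x ≠ π y ∧ e = s(x, y)}
  let leaves (b : β) (e : Sym2 V) : Prop := ∃ x y, π x = b ∧ π y ≠ b ∧ e = s(x, y)
  have hcount := Finset.card_nsmul_le_card_nsmul (R := ℕ) leaves
    (s := Finset.univ) (t := X.toFinset) (m := lam) (n := 2) ?_ ?_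
  · simpa [Set.ncard_eq_toFinset_card', mul_comm] using hcount
  · intro b _
    obtain ⟨a, rfl⟩ := hπ b
    obtain ⟨b', hb'⟩ := exists_ne (π a)
    obtain ⟨c, rfl⟩ := hπ b'
    calc lam ≤ _ := h.le_ncard_cut (S := π ⁻¹' {π a}) rfl hb'
      _ ≤ _ := by
        rw [← Set.ncard_coe_finset]
        refine Set.ncard_le_ncard ?_
        rintro e ⟨he, x, hx, y, hy, rfl⟩
        simp only [Set.mem_preimage, Set.mem_singleton_iff] at hx hy
        simp only [Finset.coe_bipartiteAbove, Set.mem_toFinset]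
        exact ⟨⟨he, x, y, hx ▸ Ne.symm hy, rfl⟩, x, y, hx, hy, rfl⟩
  · rintro e -
    induction e using Sym2.ind with | _ x y
    calc _ ≤ ({π x, π y} : Finset β).card := by
          refine Finset.card_le_card fun b hb ↦ ?_
          simp only [Finset.mem_bipartiteBelow, Finset.mem_univ, true_and, leaves] at hb
          obtain ⟨x', y', rfl, -, he⟩ := hb
          rcases Sym2.eq_iff.1 he with ⟨rfl, -⟩ | ⟨-, rfl⟩ <;> simp
      _ ≤ 2 := Finset.card_le_two

section Packing

variable {ι : Type*} {F F₀ : ι → SimpleGraph V} {i : ι}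

structure IsForestPacking (G : SimpleGraph V) (F : ι → SimpleGraph V) : Prop where
  le (i : ι) : F i ≤ G
  isAcyclic (i : ι) : (F i).IsAcyclic
  pairwise_disjoint : Pairwise (Disjoint on F)

theorem IsForestPacking.update_sup_edge [DecidableEq ι] (hF : IsForestPacking G F)
    {K : SimpleGraph V} (hK : K ≤ F i) (he : s(x, y) ∈ G.edgeSet)
    (hunused : ∀ j, s(x, y) ∉ (F j).edgeSet) (hxy : ¬K.Reachable x y) :
    IsForestPacking G (update F i (K ⊔ edge x y)) := by
  have hle : K ⊔ edge x y ≤ G := sup_le (hK.trans (hF.le i)) ((edge_le_iff G).2 (.inr he))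
  have hdisj (j : ι) (hj : j ≠ i) : Disjoint (K ⊔ edge x y) (F j) :=
    disjoint_sup_left.2 ⟨(hF.pairwise_disjoint hj.symm).mono_left hK,
      ((disjoint_edge _).2 (hunused j)).symm⟩
  refine ⟨fun j ↦ ?_, fun j ↦ ?_, fun j j' hjj' ↦ ?_⟩
  · rcases eq_or_ne j i with rfl | hj
    · simpa using hle
    · simpa [hj] using hF.le j
  · rcases eq_or_ne j i with rfl | hj
    · simpa using ((hF.isAcyclic j).anti hK).sup_edge_of_not_reachable hxy
    · simpa [hj] using hF.isAcyclic j
  · rcases eq_or_ne j i with rfl | hj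
    · simpa [onFun, update_of_ne hjj'.symm] using hdisj j' hjj'.symm
    · rcases eq_or_ne j' i with rfl | hj'
      · simpa [onFun, update_of_ne hj] using (hdisj j hj).symm
      · simpa [onFun, update_of_ne hj, update_of_ne hj'] using hF.pairwise_disjoint hjj'

theorem sum_ncard_update [Fintype ι] [DecidableEq ι] (F : ι → SimpleGraph V) (i : ι)
    (H : SimpleGraph V) :
    ∑ j, (update F i H j).edgeSet.ncard + (F i).edgeSet.ncard =
      ∑ j, (F j).edgeSet.ncard + H.edgeSet.ncard := by
  simp only [apply_update (fun _ (K : SimpleGraph V) ↦ K.edgeSet.ncard),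
    Finset.sum_update_of_mem (Finset.mem_univ i)]
  rw [← Finset.add_sum_erase _ _ (Finset.mem_univ i), Finset.sdiff_singleton_eq_erase]
  ring

variable (G) in
def IsMaxForestPacking [Fintype ι] (F : ι → SimpleGraph V) : Prop :=
  IsForestPacking G F ∧
    ∀ F' : ι → SimpleGraph V, IsForestPacking G F' →
      ∑ i, (F' i).edgeSet.ncard ≤ ∑ i, (F i).edgeSet.ncard

variable (G ι) in
theorem exists_isMaxForestPacking [Finite V] [Fintype ι] :
    ∃ F : ι → SimpleGraph V, IsMaxForestPacking G F := by
  have : Nonempty {F : ι → SimpleGraph V // IsForestPacking G F} :=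
    ⟨fun _ ↦ ⊥, fun _ ↦ bot_le, fun _ ↦ isAcyclic_bot, fun _ _ _ ↦ disjoint_bot_left⟩
  obtain ⟨⟨F, hF⟩, hmax⟩ :=
    Finite.exists_max fun F : {F : ι → SimpleGraph V // IsForestPacking G F} ↦
      ∑ i, (F.1 i).edgeSet.ncard
  exact ⟨F, hF, fun F' hF' ↦ hmax ⟨F', hF'⟩⟩

section

variable [Fintype ι] [DecidableEq ι] [Finite V]

theorem IsMaxForestPacking.reachable_of_unused (hF : IsMaxForestPacking G F)
    (he : s(x, y) ∈ G.edgeSet) (hunused : ∀ j, s(x, y) ∉ (F j).edgeSet) (i : ι) :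
    (F i).Reachable x y := by
  by_contra hxy
  have hsum := sum_ncard_update F i (F i ⊔ edge x y)
  rw [ncard_edgeSet_sup_edge (G.ne_of_adj he) (hunused i)] at hsum
  have := hF.2 _ (hF.1.update_sup_edge le_rfl he hunused hxy)
  omega

theorem IsMaxForestPacking.exchange (hF : IsMaxForestPacking G F) (he : s(x, y) ∈ G.edgeSet)
    (hunused : ∀ j, s(x, y) ∉ (F j).edgeSet) {f : Sym2 V} (hf : f ∈ (F i).edgeSet)
    (hxy : ¬((F i).deleteEdges {f}).Reachable x y) :
    IsMaxForestPacking G (update F i ((F i).deleteEdges {f} ⊔ edge x y)) := by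
  refine ⟨hF.1.update_sup_edge (deleteEdges_le _) he hunused hxy, fun F' hF' ↦ ?_⟩
  have hsum := sum_ncard_update F i ((F i).deleteEdges {f} ⊔ edge x y)
  rw [ncard_edgeSet_sup_edge (G.ne_of_adj he) fun h ↦ hunused i (edgeSet_mono
    (deleteEdges_le _) h), edgeSet_deleteEdges, Set.ncard_sdiff_singleton_add_one hf] at hsum
  have := hF.2 F' hF'
  omega

end

variable [DecidableEq ι]

variable (G) in
/-- `ExchangeReachable G F₀ F e`: a sequence of exchanges, starting from `F₀` and an edge of `G`
unused by `F₀`, leads to the packing `F` with the edge `e` left out. -/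
inductive ExchangeReachable (F₀ : ι → SimpleGraph V) : (ι → SimpleGraph V) → Sym2 V → Prop
  | unused {x y : V} : s(x, y) ∈ G.edgeSet → (∀ i, s(x, y) ∉ (F₀ i).edgeSet) →
      ExchangeReachable F₀ F₀ s(x, y)
  | exchange {F : ι → SimpleGraph V} {x y u v : V} {i : ι} : ExchangeReachable F₀ F s(x, y) →
      s(u, v) ∈ (F i).edgeSet → ¬((F i).deleteEdges {s(u, v)}).Reachable x y →
      ExchangeReachable F₀ (update F i ((F i).deleteEdges {s(u, v)} ⊔ edge x y)) s(u, v)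

variable (G) in
def exchangeGraph (F₀ : ι → SimpleGraph V) : SimpleGraph V :=
  fromEdgeSet {e | ∃ F, ExchangeReachable G F₀ F e}

variable [Fintype ι] [Finite V]

theorem ExchangeReachable.isMaxForestPacking_and_unused (hF₀ : IsMaxForestPacking G F₀)
    {e : Sym2 V} (h : ExchangeReachable G F₀ F e) :
    IsMaxForestPacking G F ∧ e ∈ G.edgeSet ∧ ∀ j, e ∉ (F j).edgeSet := by
  induction h with
  | unused he hunused => exact ⟨hF₀, he, hunused⟩
  | @exchange F x y u v i _ hf hxy ih =>
    obtain ⟨hF, he, hunused⟩ := ih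
    refine ⟨hF.exchange he hunused hf hxy, hF.1.le i hf, fun j ↦ ?_⟩
    rcases eq_or_ne j i with rfl | hj
    · simp only [update_self, edgeSet_sup, edgeSet_deleteEdges, Set.mem_union, Set.mem_sdiff,
        Set.mem_singleton_iff, not_true_eq_false, and_false, false_or]
      intro huv
      exact hunused j (edgeSet_edge_subset huv ▸ hf)
    · rw [update_of_ne hj]
      exact Set.disjoint_left.1 (disjoint_edgeSet.2 (hF.1.pairwise_disjoint hj.symm)) hf

/-- By maximality the ends of the left-out edge are joined by a path in the forest `F i`, and every
edge of this path can be exchanged for it. -/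
theorem ExchangeReachable.reachable_inf_exchangeGraph (hF₀ : IsMaxForestPacking G F₀)
    (h : ExchangeReachable G F₀ F s(x, y)) (i : ι)
    (hF : ∀ ⦃u v⦄, (F i).Adj u v → (F₀ i).Adj u v ∨ (F₀ i ⊓ exchangeGraph G F₀).Reachable u v) :
    (F₀ i ⊓ exchangeGraph G F₀).Reachable x y := by
  obtain ⟨hFmax, he, hunused⟩ := h.isMaxForestPacking_and_unused hF₀
  obtain ⟨p, hp⟩ := (hFmax.reachable_of_unused he hunused i).exists_isPath
  refine p.reachable_of_forall_dart fun d hd ↦ ?_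
  have hd_edge : d.edge ∈ p.edges := List.mem_map_of_mem hd
  have hexch : ExchangeReachable G F₀ _ s(d.fst, d.snd) :=
    .exchange h (p.edges_subset_edgeSet hd_edge)
      ((hFmax.1.isAcyclic i).not_reachable_deleteEdges_of_mem_edges hp hd_edge)
  rcases hF d.adj with hadj | hreach
  · exact Adj.reachable ⟨hadj, ⟨_, hexch⟩, hadj.ne⟩
  · exact hreach

theorem ExchangeReachable.adj_or_reachable_inf_exchangeGraph (hF₀ : IsMaxForestPacking G F₀)
    {e : Sym2 V} (h : ExchangeReachable G F₀ F e) (i : ι) ⦃u v : V⦄ (huv : (F i).Adj u v) :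
    (F₀ i).Adj u v ∨ (F₀ i ⊓ exchangeGraph G F₀).Reachable u v := by
  induction h generalizing u v with
  | unused => exact .inl huv
  | @exchange F x y u' v' j h _ _ ih =>
    rcases eq_or_ne i j with rfl | hij
    · simp only [update_self, sup_adj, deleteEdges_adj, edge_adj] at huv
      rcases huv with ⟨huv, -⟩ | ⟨⟨rfl, rfl⟩ | ⟨rfl, rfl⟩, -⟩
      · exact ih huv
      · exact .inr (h.reachable_inf_exchangeGraph hF₀ i ih)
      · exact .inr (h.reachable_inf_exchangeGraph hF₀ i ih).symm
    · exact ih (by simpa [update_of_ne hij] using huv)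

theorem IsMaxForestPacking.reachable_inf_exchangeGraph (hF₀ : IsMaxForestPacking G F₀) (i : ι)
    ⦃u v : V⦄ (huv : (exchangeGraph G F₀).Adj u v) :
    (F₀ i ⊓ exchangeGraph G F₀).Reachable u v := by
  obtain ⟨⟨F, h⟩, -⟩ := huv
  exact h.reachable_inf_exchangeGraph hF₀ i (h.adj_or_reachable_inf_exchangeGraph hF₀ i)

/-- If the exchange graph had `c ≥ 2` components, the `≥ c * lam / 2` edges of `G` between them
would all lie in the packing, and each forest would moreover span every component, so the
packing would have at least `k * n` edges; but `k` forests have at most `k * (n - 1)`. -/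
theorem IsMaxForestPacking.preconnected_exchangeGraph [Nonempty ι] {lam : ℕ}
    (hG : _root_.IsEdgeConnected G lam) (hk : 2 * Fintype.card ι ≤ lam)
    (hF₀ : IsMaxForestPacking G F₀) : (exchangeGraph G F₀).Preconnected := by
  set A := exchangeGraph G F₀
  have := hG.1.nonempty
  by_contra hA
  have : Nontrivial A.ConnectedComponent := by
    obtain ⟨u, v, huv⟩ : ∃ u v, ¬A.Reachable u v := by simpa [Preconnected] using hA
    exact ⟨_, _, fun h ↦ huv (ConnectedComponent.exact h)⟩
  have hcut := hG.card_mul_le_two_mul_ncard_crossing (π := A.connectedComponentMk)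
    Quot.mk_surjective
  set X := {e ∈ G.edgeSet | ∃ x y, A.connectedComponentMk x ≠ A.connectedComponentMk y ∧
    e = s(x, y)}
  have hX : X ⊆ ⋃ i ∈ Finset.univ, (F₀ i).edgeSet \ A.edgeSet := by
    rintro _ ⟨he, x, y, hxy, rfl⟩
    have hnA : s(x, y) ∉ A.edgeSet := fun h ↦ hxy (ConnectedComponent.sound h.reachable)
    obtain ⟨i, hi⟩ : ∃ i, s(x, y) ∈ (F₀ i).edgeSet := by
      by_contra! hunused
      exact hnA ⟨⟨F₀, .unused he hunused⟩, G.ne_of_adj he⟩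
    simp only [Finset.mem_univ, Set.iUnion_true, Set.mem_iUnion]
    exact ⟨i, hi, hnA⟩
  have hcrossing := (Set.ncard_le_ncard hX).trans (Finset.set_ncard_biUnion_le _ _)
  have hspan (i : ι) :
      Nat.card V ≤ Nat.card A.ConnectedComponent + ((F₀ i).edgeSet ∩ A.edgeSet).ncard := by
    rw [← edgeSet_inf]
    exact card_le_card_connectedComponent_add_ncard_edgeSet.trans
      (Nat.add_le_add_right (card_connectedComponent_le_of_forall_adj
        (hF₀.reachable_inf_exchangeGraph i)) _)
  have hforest (i : ι) := (hF₀.1.isAcyclic i).ncard_edgeSet_add_one_le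
  have hsplit (i : ι) := Set.ncard_inter_add_ncard_sdiff_eq_ncard (F₀ i).edgeSet A.edgeSet
  have hspan_sum := Finset.sum_le_sum fun i (_ : i ∈ Finset.univ) ↦ hspan i
  have hforest_sum := Finset.sum_le_sum fun i (_ : i ∈ Finset.univ) ↦ hforest i
  have hsplit_sum := Finset.sum_congr rfl fun i (_ : i ∈ Finset.univ) ↦ hsplit i
  simp only [Finset.sum_add_distrib, Finset.sum_const, Finset.card_univ, smul_eq_mul,
    mul_one] at hspan_sum hforest_sum hsplit_sum
  have := Nat.mul_le_mul_left (Nat.card A.ConnectedComponent) hk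
  have := Fintype.card_pos (α := ι)
  nlinarith

theorem IsMaxForestPacking.isTree {lam : ℕ} (hG : _root_.IsEdgeConnected G lam)
    (hk : 2 * Fintype.card ι ≤ lam) (hF₀ : IsMaxForestPacking G F₀) (i : ι) : (F₀ i).IsTree := by
  have := hG.1.nonempty
  have : Nonempty ι := ⟨i⟩
  refine ⟨⟨fun u v ↦ ?_⟩, hF₀.1.isAcyclic i⟩
  exact ((hF₀.preconnected_exchangeGraph hG hk u v).of_forall_adj
    (hF₀.reachable_inf_exchangeGraph i)).mono inf_le_left

end Packing

end SimpleGraph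

/-- `⌈(λ - 1)/2⌉ = ⌊λ/2⌋ = lam / 2` for a natural number `λ`. -/
theorem stmt11 {V : Type*} [Fintype V] (G : SimpleGraph V) (lam : ℕ)
    (hconn : IsEdgeConnected G lam) :
    ∃ T : Fin (lam / 2) → SimpleGraph V,
      (∀ i, T i ≤ G ∧ (T i).IsTree) ∧
      ∀ i j, i ≠ j → Disjoint (T i).edgeSet (T j).edgeSet := by
  obtain ⟨T, hT⟩ := G.exists_isMaxForestPacking (Fin (lam / 2))
  have hk : 2 * Fintype.card (Fin (lam / 2)) ≤ lam := by simpa using Nat.mul_div_le lam 2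
  exact ⟨T, fun i ↦ ⟨hT.1.le i, hT.isTree hconn hk i⟩,
    fun i j hij ↦ SimpleGraph.disjoint_edgeSet.2 (hT.1.pairwise_disjoint hij)⟩
end
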